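/- arXiv:1804.00903 — 8 statements merged into one kernel-verified Lean document; each statement's English description precedes it below -/
import Mathlib

section
/- Let m ≥ 1 be an integer, let γ ∈ (0,1), and let 0 < r₁ < r₂. Define f : ℝ → ℝ by f(s) = γ for s ∈ [0, r₁] and f(s) = −(1−γ) for s ∈ (r₁, r₂], define h(t) = ∫₀ᵗ s^{m−1} f(s) ds for t ∈ [0, r₂], and define v(r) = ∫_r^{r₂} t^{1−m} h(t) dt for r ∈ [0, r₂]. Then v(r) ≥ 0 for every r ∈ [0, r₂] if and only if r₁^m ≥ (1−γ) r₂^m. -/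
/-!
Integrating the equation once, `h(t) = (min(t, r₁)^m − (1−γ) t^m) / m`, so `v' = −t^{1−m} h`.
If `r₁^m ≥ (1−γ) r₂^m` then `h ≥ 0` on `[0, r₂]` and `v`, an integral of `h` against a positive
weight, is non-negative. Otherwise `h < 0` on `(t₀, r₂]`, where `t₀^m = r₁^m / (1−γ)`, and then
`v(t₀) < 0`.
-/

open MeasureTheory intervalIntegral Set

theorem integral_pow_mul_of_eqOn_Ioc {f : ℝ → ℝ} {a b c : ℝ} (n : ℕ) (hab : a ≤ b)
    (hf : EqOn f (fun _ ↦ c) (Ioc a b)) :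
    ∫ s in a..b, s ^ n * f s = c * (b ^ (n + 1) - a ^ (n + 1)) / (n + 1) := by
  have hfc : ∫ s in a..b, s ^ n * f s = ∫ s in a..b, s ^ n * c :=
    integral_congr_ae (.of_forall fun s hs ↦ by rw [uIoc_of_le hab] at hs; rw [hf hs])
  rw [hfc, intervalIntegral.integral_mul_const, integral_pow]
  ring

theorem intervalIntegrable_pow_mul_of_eqOn_Ioc {f : ℝ → ℝ} {a b c : ℝ} (n : ℕ) (hab : a ≤ b)
    (hf : EqOn f (fun _ ↦ c) (Ioc a b)) :
    IntervalIntegrable (fun s ↦ s ^ n * f s) volume a b :=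
  (((continuous_pow n).mul (continuous_const (y := c))).intervalIntegrable a b).congr fun s hs ↦ by
    rw [uIoc_of_le hab] at hs
    simp only [hf hs, Pi.mul_apply]

theorem integral_pow_mul_of_eqOn_Ioc_of_eqOn_Ioc {f : ℝ → ℝ} {a b t α β : ℝ} (n : ℕ)
    (hab : a ≤ b) (hbt : b ≤ t) (hα : EqOn f (fun _ ↦ α) (Ioc a b))
    (hβ : EqOn f (fun _ ↦ β) (Ioc b t)) :
    ∫ s in a..t, s ^ n * f s =
      (α * (b ^ (n + 1) - a ^ (n + 1)) + β * (t ^ (n + 1) - b ^ (n + 1))) / (n + 1) := by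
  rw [← integral_add_adjacent_intervals (intervalIntegrable_pow_mul_of_eqOn_Ioc n hab hα)
    (intervalIntegrable_pow_mul_of_eqOn_Ioc n hbt hβ), integral_pow_mul_of_eqOn_Ioc n hab hα,
    integral_pow_mul_of_eqOn_Ioc n hbt hβ]
  ring

theorem intervalIntegral_neg_of_eqOn_Ioc {g G : ℝ → ℝ} {a b : ℝ} (hab : a < b)
    (hG : ContinuousOn G (Icc a b)) (hgG : EqOn g G (Ioc a b)) (hneg : ∀ x ∈ Ioc a b, g x < 0) :
    ∫ x in a..b, g x < 0 := by
  have hint : IntervalIntegrable (fun x ↦ -g x) volume a b :=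
    (hG.neg.intervalIntegrable_of_Icc hab.le).congr fun x hx ↦ by
      rw [uIoc_of_le hab.le] at hx
      simp only [hgG hx, Pi.neg_apply]
  have hpos := intervalIntegral_pos_of_pos_on hint
    (fun x hx ↦ neg_pos.mpr (hneg x (Ioo_subset_Ioc_self hx))) hab
  rw [intervalIntegral.integral_neg] at hpos
  linarith

section

variable {m : ℕ} {γ r₁ r₂ : ℝ} {f : ℝ → ℝ}

theorem integral_pow_mul_eq_min_pow (hm : 1 ≤ m) (hr₁ : 0 ≤ r₁)
    (hf₁ : ∀ s ∈ Icc 0 r₁, f s = γ) (hf₂ : ∀ s ∈ Ioc r₁ r₂, f s = -(1 - γ))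
    {t : ℝ} (ht : t ∈ Icc 0 r₂) :
    ∫ s in (0 : ℝ)..t, s ^ (m - 1) * f s = (min t r₁ ^ m - (1 - γ) * t ^ m) / m := by
  obtain ⟨n, rfl⟩ := Nat.exists_eq_add_of_le' hm
  rw [Nat.add_sub_cancel, integral_pow_mul_of_eqOn_Ioc_of_eqOn_Ioc (α := γ) (β := -(1 - γ)) n
    (le_min ht.1 hr₁) (min_le_left t r₁)
    (fun s hs ↦ hf₁ s ⟨hs.1.le, hs.2.trans (min_le_right t r₁)⟩)
    (fun s hs ↦ hf₂ s ⟨lt_of_not_ge fun hsr ↦ hs.1.not_ge (le_min hs.2 hsr), hs.2.trans ht.2⟩)]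
  push_cast
  ring

theorem min_pow_sub_mul_pow_nonneg (hγ : γ ∈ Icc (0 : ℝ) 1) (hr : (1 - γ) * r₂ ^ m ≤ r₁ ^ m)
    {t : ℝ} (ht : t ∈ Icc 0 r₂) : 0 ≤ min t r₁ ^ m - (1 - γ) * t ^ m := by
  rcases le_total t r₁ with htr₁ | hr₁t
  · rw [min_eq_left htr₁]
    nlinarith [pow_nonneg ht.1 m, hγ.1]
  · rw [min_eq_right hr₁t]
    nlinarith [pow_le_pow_left₀ ht.1 ht.2 m, hγ.2]

theorem exists_forall_Ioc_pow_sub_mul_pow_neg (hm : m ≠ 0) (hγ : γ ∈ Ico (0 : ℝ) 1)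
    (hr₁ : 0 ≤ r₁) (hr₁₂ : r₁ ≤ r₂) (hr : r₁ ^ m < (1 - γ) * r₂ ^ m) :
    ∃ t₀ ∈ Ico r₁ r₂, ∀ t ∈ Ioc t₀ r₂, r₁ ^ m - (1 - γ) * t ^ m < 0 := by
  have hγ' : 0 < 1 - γ := sub_pos.mpr hγ.2
  have hx : 0 ≤ r₁ ^ m / (1 - γ) := div_nonneg (pow_nonneg hr₁ m) hγ'.le
  set t₀ := (r₁ ^ m / (1 - γ)) ^ (m⁻¹ : ℝ)
  have ht₀ : 0 ≤ t₀ := Real.rpow_nonneg hx _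
  have ht₀m : t₀ ^ m = r₁ ^ m / (1 - γ) := Real.rpow_inv_natCast_pow hx hm
  refine ⟨t₀, ⟨?_, ?_⟩, fun t ht ↦ ?_⟩
  · refine le_of_pow_le_pow_left₀ hm ht₀ ?_
    rw [ht₀m, le_div_iff₀ hγ']
    nlinarith [pow_nonneg hr₁ m, hγ.1]
  · refine lt_of_pow_lt_pow_left₀ m (hr₁.trans hr₁₂) ?_
    rw [ht₀m, div_lt_iff₀ hγ']
    linarith
  · have := pow_lt_pow_left₀ ht.1 ht₀ hm
    rw [ht₀m, div_lt_iff₀ hγ'] at this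
    linarith

end

/-- The radial solution of `−v'' − ((m−1)/r)v' = γ·1_{[0,r₁]} − (1−γ)·1_{(r₁,r₂]}` on the
ball `B_{r₂} ⊆ ℝ^m` with `v'(0) = 0`, `v(r₂) = 0`, written in integrated form, is
non-negative on `[0, r₂]` if and only if `r₁^m ≥ (1−γ) r₂^m`. -/
theorem stmt2 (m : ℕ) (hm : 1 ≤ m) (γ : ℝ) (hγ : γ ∈ Set.Ioo (0 : ℝ) 1)
    (r₁ r₂ : ℝ) (hr₁ : 0 < r₁) (hr₁₂ : r₁ < r₂)
    (f : ℝ → ℝ)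
    (hf₁ : ∀ s ∈ Set.Icc (0 : ℝ) r₁, f s = γ)
    (hf₂ : ∀ s ∈ Set.Ioc r₁ r₂, f s = -(1 - γ))
    (h : ℝ → ℝ) (hh : ∀ t ∈ Set.Icc (0 : ℝ) r₂, h t = ∫ s in (0 : ℝ)..t, s ^ (m - 1) * f s)
    (v : ℝ → ℝ) (hv : ∀ r ∈ Set.Icc (0 : ℝ) r₂, v r = ∫ t in r..r₂, (t ^ (m - 1))⁻¹ * h t) :
    (∀ r ∈ Set.Icc (0 : ℝ) r₂, 0 ≤ v r) ↔ r₁ ^ m ≥ (1 - γ) * r₂ ^ m := by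
  obtain ⟨hγ0, hγ1⟩ := hγ
  have hflux : ∀ t ∈ Icc 0 r₂, h t = (min t r₁ ^ m - (1 - γ) * t ^ m) / m := fun t ht ↦
    (hh t ht).trans (integral_pow_mul_eq_min_pow hm hr₁.le hf₁ hf₂ ht)
  constructor
  · intro hv_nonneg
    by_contra! hlt
    obtain ⟨t₀, ⟨hr₁t₀, ht₀r₂⟩, hneg⟩ :=
      exists_forall_Ioc_pow_sub_mul_pow_neg (by omega) ⟨hγ0.le, hγ1⟩ hr₁.le hr₁₂.le hlt
    have ht₀ : t₀ ∈ Icc 0 r₂ := ⟨hr₁.le.trans hr₁t₀, ht₀r₂.le⟩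
    have hh_neg : ∀ t ∈ Ioc t₀ r₂, h t = (r₁ ^ m - (1 - γ) * t ^ m) / m := fun t ht ↦ by
      rw [hflux t ⟨ht₀.1.trans ht.1.le, ht.2⟩, min_eq_right (hr₁t₀.trans_lt ht.1).le]
    have hv_neg : ∫ t in t₀..r₂, (t ^ (m - 1))⁻¹ * h t < 0 := by
      refine intervalIntegral_neg_of_eqOn_Ioc ht₀r₂
        (G := fun t ↦ (t ^ (m - 1))⁻¹ * ((r₁ ^ m - (1 - γ) * t ^ m) / m)) ?_
        (fun t ht ↦ by simp only [hh_neg t ht]) fun t ht ↦ ?_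
      · exact ContinuousOn.mul (continuousOn_pow _ |>.inv₀ fun t ht ↦
          pow_ne_zero _ (hr₁.trans_le (hr₁t₀.trans ht.1)).ne') (by fun_prop)
      · have ht0 : 0 < t := hr₁.trans_le (hr₁t₀.trans ht.1.le)
        rw [hh_neg t ht]
        exact mul_neg_of_pos_of_neg (by positivity)
          (div_neg_of_neg_of_pos (hneg t ht) (by positivity))
    linarith [hv_nonneg t₀ ht₀, hv t₀ ht₀]
  · intro hge r hr
    rw [hv r hr]
    refine intervalIntegral.integral_nonneg hr.2 fun t ht ↦ ?_
    have ht : t ∈ Icc 0 r₂ := ⟨hr.1.trans ht.1, ht.2⟩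
    rw [hflux t ht]
    have := min_pow_sub_mul_pow_nonneg ⟨hγ0.le, hγ1.le⟩ hge ht
    have := ht.1
    positivity
end

section
/- Let m ≥ 2 be an integer, let x ∈ ℝ^m, let r > 0, and let A ⊆ ℝ^m be a Lebesgue measurable set with |A| ≤ ω_m r^m. Then ∫_A ‖x − y‖^{1−m} dy ≤ m ω_m r. -/
open MeasureTheory Measure Set Metric Module
open scoped ENNReal

/-!
Let `B` be the ball of radius `r` about `x`, so `|A| ≤ |B|` and hence `|A \ B| ≤ |B \ A|`. The
kernel `‖x - y‖^{1-m}` is at most `r^{1-m}` off `B` and at least `r^{1-m}` on `B`, so trading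
`A \ B` for `B \ A` can only increase the integral: `∫_A ≤ ∫_B`. In polar coordinates the kernel
cancels the Jacobian `t^{m-1}`, so `∫_B = m ω_m r`.
-/

section BathtubComparison

variable {α : Type*} [MeasurableSpace α] {μ : Measure α} {A B : Set α}

theorem measure_sdiff_le_measure_sdiff (hA : NullMeasurableSet A μ) (hB : NullMeasurableSet B μ)
    (hAB : μ A ≤ μ B) (hfin : μ (A ∩ B) ≠ ∞) : μ (A \ B) ≤ μ (B \ A) := by
  rwa [← ENNReal.add_le_add_iff_left hfin, measure_inter_add_sdiff₀ A hB, inter_comm,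
    measure_inter_add_sdiff₀ B hA]

theorem setLIntegral_le_setLIntegral_of_measure_le {f : α → ℝ≥0∞} {c : ℝ≥0∞}
    (hA : MeasurableSet A) (hB : MeasurableSet B) (hAB : μ A ≤ μ B) (hB_fin : μ B ≠ ∞)
    (h_out : ∀ y ∉ B, f y ≤ c) (h_in : ∀ᵐ y ∂μ, y ∈ B → c ≤ f y) :
    ∫⁻ y in A, f y ∂μ ≤ ∫⁻ y in B, f y ∂μ := by
  have h_sdiff : μ (A \ B) ≤ μ (B \ A) :=
    measure_sdiff_le_measure_sdiff hA.nullMeasurableSet hB.nullMeasurableSet hAB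
      (measure_ne_top_of_subset inter_subset_right hB_fin)
  have h_outside : ∫⁻ y in A \ B, f y ∂μ ≤ c * μ (A \ B) :=
    (setLIntegral_mono measurable_const fun y hy ↦ h_out y hy.2).trans_eq (setLIntegral_const _ _)
  have h_inside : c * μ (B \ A) ≤ ∫⁻ y in B \ A, f y ∂μ :=
    (setLIntegral_const _ _).symm.trans_le
      (setLIntegral_mono_ae' (hB.diff hA) (h_in.mono fun y hy hyBA ↦ hy hyBA.1))
  calc ∫⁻ y in A, f y ∂μ = ∫⁻ y in A ∩ B, f y ∂μ + ∫⁻ y in A \ B, f y ∂μ :=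
        (lintegral_inter_add_sdiff f A hB).symm
    _ ≤ ∫⁻ y in A ∩ B, f y ∂μ + ∫⁻ y in B \ A, f y ∂μ :=
        add_le_add le_rfl (h_outside.trans ((mul_le_mul_right h_sdiff c).trans h_inside))
    _ = ∫⁻ y in B, f y ∂μ := by rw [inter_comm, lintegral_inter_add_sdiff f B hA]

end BathtubComparison

section PolarCoordinates

variable {E : Type*} [NormedAddCommGroup E] [NormedSpace ℝ E] [MeasurableSpace E] [BorelSpace E]
  [FiniteDimensional ℝ E] [Nontrivial E] (μ : Measure E) [μ.IsAddHaarMeasure]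

theorem lintegral_fun_norm_addHaar {g : ℝ → ℝ≥0∞} (hg : Measurable g) :
    ∫⁻ x, g ‖x‖ ∂μ = finrank ℝ E * μ (ball 0 1) *
      ∫⁻ t in Ioi (0 : ℝ), ENNReal.ofReal (t ^ (finrank ℝ E - 1)) * g t := by
  calc
    ∫⁻ x, g ‖x‖ ∂μ = ∫⁻ x : ({0}ᶜ : Set E), g ‖(x : E)‖ ∂(μ.comap (↑)) := by
      rw [lintegral_subtype_comap (measurableSet_singleton _).compl fun x ↦ g ‖x‖,
        restrict_compl_singleton]
    _ = ∫⁻ p : sphere (0 : E) 1 × Ioi (0 : ℝ), g p.2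
          ∂(μ.toSphere.prod (volumeIoiPow (finrank ℝ E - 1))) := by
      rw [← μ.measurePreserving_homeomorphUnitSphereProd.lintegral_comp_emb
        (Homeomorph.measurableEmbedding _) fun p ↦ g p.2]
      simp [homeomorphUnitSphereProd_apply_snd_coe]
    _ = μ.toSphere univ * ∫⁻ t : Ioi (0 : ℝ), g t ∂(volumeIoiPow (finrank ℝ E - 1)) := by
      have hg' : Measurable fun p : sphere (0 : E) 1 × Ioi (0 : ℝ) ↦ g p.2 :=
        hg.comp (measurable_subtype_coe.comp measurable_snd)
      rw [lintegral_prod _ hg'.aemeasurable]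
      simp [lintegral_const, mul_comm]
    _ = _ := by
      rw [volumeIoiPow, lintegral_withDensity_eq_lintegral_mul _
          (measurable_subtype_coe.pow_const _).ennreal_ofReal
          (show Measurable fun t : Ioi (0 : ℝ) ↦ g t from hg.comp measurable_subtype_coe),
        ← lintegral_subtype_comap measurableSet_Ioi
          fun t ↦ ENNReal.ofReal (t ^ (finrank ℝ E - 1)) * g t, toSphere_apply_univ]
      rfl

/-- The weight `‖z‖^{1-n}` cancels the Jacobian `t^{n-1}` of polar coordinates. -/
theorem setLIntegral_ball_norm_rpow_one_sub_finrank (r : ℝ) :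
    ∫⁻ z in ball (0 : E) r, ENNReal.ofReal (‖z‖ ^ (1 - (finrank ℝ E : ℝ))) ∂μ =
      finrank ℝ E * μ (ball 0 1) * ENNReal.ofReal r := by
  set n := finrank ℝ E
  have hn : 1 ≤ n := finrank_pos
  set G : ℝ → ℝ≥0∞ := (Iio r).indicator fun t ↦ ENNReal.ofReal (t ^ (1 - (n : ℝ)))
  have hG : Measurable G :=
    ((measurable_id.pow_const _).ennreal_ofReal).indicator measurableSet_Iio
  have h_radial : ∀ t ∈ Ioo 0 r,
      ENNReal.ofReal (t ^ (n - 1)) * ENNReal.ofReal (t ^ (1 - (n : ℝ))) = 1 := by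
    intro t ht
    rw [← ENNReal.ofReal_mul (pow_nonneg ht.1.le _), ← Real.rpow_natCast, Nat.cast_sub hn,
      ← Real.rpow_add ht.1]
    norm_num
  calc ∫⁻ z in ball (0 : E) r, ENNReal.ofReal (‖z‖ ^ (1 - (n : ℝ))) ∂μ
      = ∫⁻ z, G ‖z‖ ∂μ := by
        rw [← lintegral_indicator measurableSet_ball]
        congr with z
        by_cases hz : ‖z‖ < r <;> simp [G, indicator, hz]
    _ = n * μ (ball 0 1) * ∫⁻ t in Ioi 0, ENNReal.ofReal (t ^ (n - 1)) * G t :=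
        lintegral_fun_norm_addHaar μ hG
    _ = n * μ (ball 0 1) * ENNReal.ofReal r := by
        have h_ind : ∀ t, ENNReal.ofReal (t ^ (n - 1)) * G t = (Iio r).indicator
            (fun t ↦ ENNReal.ofReal (t ^ (n - 1)) * ENNReal.ofReal (t ^ (1 - (n : ℝ)))) t :=
          fun t ↦ (indicator_mul_right (Iio r) (fun t ↦ ENNReal.ofReal (t ^ (n - 1))) _).symm
        simp only [h_ind]
        rw [lintegral_indicator measurableSet_Iio, restrict_restrict measurableSet_Iio,
          Iio_inter_Ioi, setLIntegral_congr_fun measurableSet_Ioo h_radial, setLIntegral_one,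
          Real.volume_Ioo, sub_zero]

theorem setLIntegral_ball_norm_sub_rpow_one_sub_finrank (x : E) (r : ℝ) :
    ∫⁻ y in ball x r, ENNReal.ofReal (‖x - y‖ ^ (1 - (finrank ℝ E : ℝ))) ∂μ =
      finrank ℝ E * μ (ball 0 1) * ENNReal.ofReal r := by
  have h_preimage : (· - x) ⁻¹' ball (0 : E) r = ball x r := by
    ext y
    simp [dist_eq_norm]
  simp_rw [← setLIntegral_ball_norm_rpow_one_sub_finrank μ r, ← h_preimage, norm_sub_rev x]
  exact (measurePreserving_sub_right μ x).setLIntegral_comp_preimage measurableSet_ball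
    (measurable_norm.pow_const _).ennreal_ofReal

end PolarCoordinates

section RieszKernel

variable {E : Type*} [NormedAddCommGroup E] [MeasurableSpace E] [OpensMeasurableSpace E]
  {μ : Measure E} [NullSingletonClass μ]

theorem setLIntegral_norm_sub_rpow_le_ball {x : E} {r p : ℝ} (hr : 0 < r) (hp : p ≤ 0)
    {A : Set E} (hA : MeasurableSet A) (hAB : μ A ≤ μ (ball x r)) (hfin : μ (ball x r) ≠ ∞) :
    ∫⁻ y in A, ENNReal.ofReal (‖x - y‖ ^ p) ∂μ ≤
      ∫⁻ y in ball x r, ENNReal.ofReal (‖x - y‖ ^ p) ∂μ := by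
  refine setLIntegral_le_setLIntegral_of_measure_le (c := ENNReal.ofReal (r ^ p)) hA
    measurableSet_ball hAB hfin (fun y hy ↦ ?_) ?_
  · rw [mem_ball, not_lt, dist_eq_norm, norm_sub_rev] at hy
    exact ENNReal.ofReal_le_ofReal (Real.rpow_le_rpow_of_nonpos hr hy hp)
  · filter_upwards [μ.ae_ne x] with y hyx hy
    rw [mem_ball, dist_eq_norm, norm_sub_rev] at hy
    exact ENNReal.ofReal_le_ofReal
      (Real.rpow_le_rpow_of_nonpos (norm_pos_iff.2 (sub_ne_zero.2 hyx.symm)) hy.le hp)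

end RieszKernel

/-- Rearrangement (bathtub) bound: if `|A| ≤ ω_m r^m` then
`∫_A ‖x − y‖^{1−m} dy ≤ m ω_m r`, where `ω_m` is the volume of the unit ball in `ℝ^m`. -/
theorem stmt3 (m : ℕ) (hm : 2 ≤ m) (x : EuclideanSpace ℝ (Fin m)) (r : ℝ) (hr : 0 < r)
    (A : Set (EuclideanSpace ℝ (Fin m))) (hA : MeasurableSet A)
    (ω : ℝ) (hω : ω = (volume (Metric.ball (0 : EuclideanSpace ℝ (Fin m)) 1)).toReal)
    (hAvol : volume A ≤ ENNReal.ofReal (ω * r ^ m)) :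
    ∫ y in A, ‖x - y‖ ^ ((1 : ℝ) - m) ≤ m * ω * r := by
  have : Nonempty (Fin m) := ⟨⟨0, by omega⟩⟩
  have h_exp : (1 : ℝ) - m ≤ 0 := sub_nonpos.2 (Nat.one_le_cast.2 (by omega))
  have h_unit_ball : volume (ball (0 : EuclideanSpace ℝ (Fin m)) 1) = ENNReal.ofReal ω := by
    rw [hω, ENNReal.ofReal_toReal measure_ball_lt_top.ne]
  have hω_nonneg : 0 ≤ ω := hω ▸ ENNReal.toReal_nonneg
  have h_ball_vol : volume (ball x r) = ENNReal.ofReal (ω * r ^ m) := by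
    rw [addHaar_ball volume x hr.le, finrank_euclideanSpace_fin, h_unit_ball,
      ENNReal.ofReal_mul hω_nonneg, mul_comm]
  have h_ball_integral := setLIntegral_ball_norm_sub_rpow_one_sub_finrank volume x r
  rw [finrank_euclideanSpace_fin, h_unit_ball, ← ENNReal.ofReal_natCast,
    ← ENNReal.ofReal_mul (by positivity), ← ENNReal.ofReal_mul (by positivity)]
    at h_ball_integral
  rw [integral_eq_lintegral_of_nonneg_ae (.of_forall fun y ↦ by positivity)
    (Measurable.aestronglyMeasurable (by fun_prop))]
  refine ENNReal.toReal_le_of_le_ofReal (by positivity) ?_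
  exact (setLIntegral_norm_sub_rpow_le_ball hr h_exp hA (hAvol.trans_eq h_ball_vol.symm)
    measure_ball_lt_top.ne).trans_eq h_ball_integral
end

section
/- Let m ≥ 3 be an integer, let e ∈ ℝ^m be a unit vector, let H = {y ∈ ℝ^m : ⟨y, e⟩ > 0}, let x ∈ H, let x* = x − 2⟨x, e⟩ e, and let c_m = Γ((m−2)/2)/(4π^{m/2}). Let r > 0 and let A ⊆ H be a Lebesgue measurable set with |A| ≤ ω_m r^m. Then ∫_A c_m (‖x − y‖^{2−m} − ‖x* − y‖^{2−m}) dy ≤ 2 r ⟨x, e⟩. -/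
open MeasureTheory RealInnerProductSpace Real
open Metric Set Module

/-!
For `y ∈ H` the reflected point is farther away, `‖x - y‖ ≤ ‖x* - y‖ ≤ ‖x - y‖ + 2⟨x, e⟩`, so
convexity of `t ↦ t ^ (2 - m)` bounds the integrand by `c_m (m - 2) 2⟨x, e⟩ ‖x - y‖ ^ (1 - m)`.
Among sets of measure at most `|B(x, r)|`, the radially decreasing kernel `‖x - y‖ ^ (1 - m)` has
its largest integral on `B(x, r)` itself (bathtub principle), and polar coordinates give
`∫_{B(x, r)} ‖x - y‖ ^ (1 - m) dy = m ω_m r`. Finally `c_m (m - 2) m ω_m = 1`.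
-/

theorem Real.rpow_sub_rpow_le_of_nonpos {p a b : ℝ} (hp : p ≤ 0) (ha : 0 ≤ a) (hab : a ≤ b) :
    a ^ p - b ^ p ≤ -p * (b - a) * a ^ (p - 1) := by
  rcases ha.eq_or_lt with rfl | ha
  -- at `a = 0` the claim rests on the convention `0 ^ p = 0` for `p < 0`
  · rcases hp.eq_or_lt with rfl | hp
    · simp
    · rw [zero_rpow hp.ne, zero_rpow (by linarith), mul_zero, zero_sub, neg_nonpos]
      exact rpow_nonneg hab p
  have hu : 0 < b / a := div_pos (ha.trans_le hab) ha
  have key : 1 - (b / a) ^ p ≤ -p * (b / a - 1) :=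
    calc 1 - (b / a) ^ p = 1 - ((b / a) ^ (-p))⁻¹ := by rw [rpow_neg hu.le, inv_inv]
      _ ≤ log ((b / a) ^ (-p)) := one_sub_inv_le_log_of_pos (rpow_pos_of_pos hu _)
      _ = -p * log (b / a) := log_rpow hu _
      _ ≤ -p * (b / a - 1) :=
        mul_le_mul_of_nonneg_left (log_le_sub_one_of_pos hu) (neg_nonneg.2 hp)
  have hap : 0 < a ^ p := rpow_pos_of_pos ha p
  calc a ^ p - b ^ p = a ^ p * (1 - (b / a) ^ p) := by
        rw [div_rpow (ha.le.trans hab) ha.le]; field_simp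
    _ ≤ a ^ p * (-p * (b / a - 1)) := mul_le_mul_of_nonneg_left key hap.le
    _ = -p * (b - a) * a ^ (p - 1) := by rw [rpow_sub_one ha.ne']; field_simp

section Reflection

variable {F : Type*} [NormedAddCommGroup F] [InnerProductSpace ℝ F] {e x y : F}

theorem norm_reflection_sub_sq (he : ‖e‖ = 1) :
    ‖x - (2 * ⟪x, e⟫) • e - y‖ ^ 2 = ‖x - y‖ ^ 2 + 4 * ⟪x, e⟫ * ⟪y, e⟫ := by
  rw [sub_right_comm, norm_sub_sq_real, real_inner_smul_right, inner_sub_left, norm_smul,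
    Real.norm_eq_abs, he, mul_one, sq_abs]
  ring

theorem norm_sub_le_norm_reflection_sub (he : ‖e‖ = 1) (hx : 0 ≤ ⟪x, e⟫) (hy : 0 ≤ ⟪y, e⟫) :
    ‖x - y‖ ≤ ‖x - (2 * ⟪x, e⟫) • e - y‖ := by
  refine (pow_le_pow_iff_left₀ (norm_nonneg _) (norm_nonneg _) two_ne_zero).1 ?_
  rw [norm_reflection_sub_sq he]
  nlinarith [mul_nonneg hx hy]

theorem norm_reflection_sub_le (he : ‖e‖ = 1) (hx : 0 ≤ ⟪x, e⟫) :
    ‖x - (2 * ⟪x, e⟫) • e - y‖ ≤ ‖x - y‖ + 2 * ⟪x, e⟫ := by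
  rw [sub_right_comm]
  refine (norm_sub_le _ _).trans_eq ?_
  rw [norm_smul, he, mul_one, Real.norm_of_nonneg (by positivity)]

theorem norm_sub_rpow_sub_norm_reflection_sub_rpow_le (he : ‖e‖ = 1) (hx : 0 ≤ ⟪x, e⟫)
    (hy : 0 ≤ ⟪y, e⟫) {p : ℝ} (hp : p ≤ 0) :
    ‖x - y‖ ^ p - ‖x - (2 * ⟪x, e⟫) • e - y‖ ^ p ≤ -p * (2 * ⟪x, e⟫) * ‖x - y‖ ^ (p - 1) := by
  refine (rpow_sub_rpow_le_of_nonpos hp (norm_nonneg _)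
    (norm_sub_le_norm_reflection_sub he hx hy)).trans ?_
  gcongr
  · exact neg_nonneg.2 hp
  · linarith [norm_reflection_sub_le (y := y) he hx]

end Reflection

section Bathtub

variable {α : Type*} [MeasurableSpace α] {μ : Measure α} {f : α → ℝ} {A B : Set α} {t : ℝ}

theorem setIntegral_le_setIntegral_of_threshold (hA : MeasurableSet A) (hB : MeasurableSet B)
    (hμ : μ A ≤ μ B) (hBfin : μ B ≠ ⊤) (hfA : IntegrableOn f A μ) (hfB : IntegrableOn f B μ)
    (ht : 0 ≤ t) (h_out : ∀ y ∈ A \ B, f y ≤ t) (h_in : ∀ᵐ y ∂μ.restrict (B \ A), t ≤ f y) :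
    ∫ y in A, f y ∂μ ≤ ∫ y in B, f y ∂μ := by
  have hAfin : μ A ≠ ⊤ := ne_top_of_le_ne_top hBfin hμ
  have hdiff : μ (A \ B) ≤ μ (B \ A) := by
    have hABfin : μ (A ∩ B) ≠ ⊤ := ne_top_of_le_ne_top hAfin (measure_mono inter_subset_left)
    rw [← ENNReal.add_le_add_iff_right hABfin, measure_sdiff_add_inter A hB, inter_comm,
      measure_sdiff_add_inter B hA]
    exact hμ
  have hBAfin : μ (B \ A) ≠ ⊤ := ne_top_of_le_ne_top hBfin (measure_mono sdiff_subset)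
  have h_diff_le : ∫ y in A \ B, f y ∂μ ≤ ∫ y in B \ A, f y ∂μ :=
    calc ∫ y in A \ B, f y ∂μ ≤ ∫ _ in A \ B, t ∂μ :=
          setIntegral_mono_on (hfA.mono_set sdiff_subset)
            (integrableOn_const (ne_top_of_le_ne_top hBAfin hdiff)) (hA.diff hB) h_out
      _ = μ.real (A \ B) * t := by rw [setIntegral_const, smul_eq_mul]
      _ ≤ μ.real (B \ A) * t := mul_le_mul_of_nonneg_right (ENNReal.toReal_mono hBAfin hdiff) ht
      _ = ∫ _ in B \ A, t ∂μ := by rw [setIntegral_const, smul_eq_mul]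
      _ ≤ ∫ y in B \ A, f y ∂μ :=
          setIntegral_mono_ae_restrict (integrableOn_const hBAfin) (hfB.mono_set sdiff_subset) h_in
  rw [← integral_inter_add_sdiff hB hfA, ← integral_inter_add_sdiff hA hfB, inter_comm]
  gcongr

end Bathtub

theorem preimage_const_sub_ball_zero {E : Type*} [SeminormedAddCommGroup E] (x : E) (R : ℝ) :
    (x - ·) ⁻¹' ball 0 R = ball x R := by
  ext y
  rw [mem_preimage, mem_ball_zero_iff, mem_ball_iff_norm']

section RadialKernel

variable {E : Type*} [NormedAddCommGroup E] [NormedSpace ℝ E] [FiniteDimensional ℝ E]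
  [MeasurableSpace E] [BorelSpace E] (μ : Measure E) [μ.IsAddHaarMeasure]

theorem integrableOn_ball_norm_sub_rpow (hE : 1 ≤ finrank ℝ E) (x : E) (R : ℝ) :
    IntegrableOn (fun y ↦ ‖x - y‖ ^ (1 - finrank ℝ E : ℝ)) (ball x R) μ := by
  have h0 : IntegrableOn (fun z : E ↦ ‖z‖ ^ (1 - finrank ℝ E : ℝ)) (ball 0 R) μ := by
    refine integrableOn_ball_of_norm_le_rpow hE (C := 1) (α := finrank ℝ E - 1) (by linarith)
      (ae_of_all _ fun z ↦ ?_) (measurable_norm.pow_const _).aestronglyMeasurable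
    rw [one_mul, neg_sub, Real.norm_of_nonneg (by positivity)]
  rw [← (μ.measurePreserving_sub_left x).integrableOn_comp_preimage
    (measurableEmbedding_subLeft x)] at h0
  rwa [preimage_const_sub_ball_zero] at h0

theorem integral_ball_norm_sub_rpow (hE : 1 ≤ finrank ℝ E) (x : E) {R : ℝ} (hR : 0 ≤ R) :
    ∫ y in ball x R, ‖x - y‖ ^ (1 - finrank ℝ E : ℝ) ∂μ = finrank ℝ E * μ.real (ball 0 1) * R := by
  have : Nontrivial E := Module.nontrivial_of_finrank_pos (R := ℝ) (by omega)
  rw [← preimage_const_sub_ball_zero, (μ.measurePreserving_sub_left x).setIntegral_preimage_emb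
    (measurableEmbedding_subLeft x) (fun z ↦ ‖z‖ ^ (1 - finrank ℝ E : ℝ)),
    ← integral_indicator measurableSet_ball]
  have hind : (ball (0 : E) R).indicator (fun z ↦ ‖z‖ ^ (1 - finrank ℝ E : ℝ)) =
      fun z ↦ (Iio R).indicator (fun u : ℝ ↦ u ^ (1 - finrank ℝ E : ℝ)) ‖z‖ := by
    ext z; simp [indicator]
  have hradial : ∀ u ∈ Ioi (0 : ℝ), u ^ (finrank ℝ E - 1) •
      (Iio R).indicator (fun u : ℝ ↦ u ^ (1 - finrank ℝ E : ℝ)) u = (Iio R).indicator 1 u := by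
    intro u (hu : 0 < u)
    by_cases huR : u ∈ Iio R
    · rw [indicator_of_mem huR, indicator_of_mem huR, smul_eq_mul, ← rpow_natCast,
        ← rpow_add hu, Nat.cast_sub hE]
      simp
    · simp [huR]
  rw [hind, integral_fun_norm_addHaar, setIntegral_congr_fun measurableSet_Ioi hradial,
    setIntegral_indicator measurableSet_Iio, Ioi_inter_Iio]
  simp only [Pi.one_apply, integral_const, MeasurableSet.univ, measureReal_restrict_apply,
    univ_inter, volume_real_Ioo, sub_zero, hR, sup_of_le_left, smul_eq_mul, mul_one, nsmul_eq_mul]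
  ring

theorem integrableOn_norm_sub_rpow_of_measure_ne_top (hE : 1 ≤ finrank ℝ E) (x : E) {A : Set E}
    (hA : MeasurableSet A) (hAμ : μ A ≠ ⊤) :
    IntegrableOn (fun y ↦ ‖x - y‖ ^ (1 - finrank ℝ E : ℝ)) A μ := by
  have h_far : IntegrableOn (fun y ↦ ‖x - y‖ ^ (1 - finrank ℝ E : ℝ)) (A \ ball x 1) μ := by
    refine Measure.integrableOn_of_bounded (M := 1)
      (ne_top_of_le_ne_top hAμ (measure_mono sdiff_subset))
      ((measurable_norm.comp (measurable_const_sub x)).pow_const _).aestronglyMeasurable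
      (ae_restrict_of_forall_mem (hA.diff measurableSet_ball) fun y hy ↦ ?_)
    have h1 : 1 ≤ ‖x - y‖ := by simpa [dist_eq_norm'] using hy.2
    rw [Real.norm_of_nonneg (by positivity)]
    exact rpow_le_one_of_one_le_of_nonpos h1 (by simp [hE])
  simpa only [inter_union_sdiff] using
    ((integrableOn_ball_norm_sub_rpow μ hE x 1).mono_set (inter_subset_right (s := A))).union h_far

theorem setIntegral_norm_sub_rpow_le_of_measure_le (hE : 1 ≤ finrank ℝ E) (x : E) {r : ℝ}
    (hr : 0 < r) {A : Set E} (hA : MeasurableSet A) (hAμ : μ A ≤ μ (ball x r)) :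
    ∫ y in A, ‖x - y‖ ^ (1 - finrank ℝ E : ℝ) ∂μ ≤ finrank ℝ E * μ.real (ball 0 1) * r := by
  have : Nontrivial E := Module.nontrivial_of_finrank_pos (R := ℝ) (by omega)
  have hexp : (1 - finrank ℝ E : ℝ) ≤ 0 := by simp [hE]
  rw [← integral_ball_norm_sub_rpow μ hE x hr.le]
  refine setIntegral_le_setIntegral_of_threshold hA measurableSet_ball hAμ measure_ball_lt_top.ne
    (integrableOn_norm_sub_rpow_of_measure_ne_top μ hE x hA
      (ne_top_of_le_ne_top measure_ball_lt_top.ne hAμ))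
    (integrableOn_ball_norm_sub_rpow μ hE x r) (rpow_nonneg hr.le (1 - finrank ℝ E : ℝ))
    (fun y hy ↦ ?_) ?_
  · have hry : r ≤ ‖x - y‖ := by simpa [dist_eq_norm'] using hy.2
    exact rpow_le_rpow_of_nonpos hr hry hexp
  · filter_upwards [ae_restrict_mem (measurableSet_ball.diff hA),
      ae_restrict_of_ae (compl_mem_ae_iff.2 (measure_singleton x))] with y hy hne
    have hyx : 0 < ‖x - y‖ := norm_pos_iff.2 (sub_ne_zero.2 (Ne.symm hne))
    exact rpow_le_rpow_of_nonpos hyx (mem_ball_iff_norm'.1 hy.1).le hexp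

end RadialKernel

theorem Gamma_div_mul_volume_ball_eq_one {m : ℕ} (hm : 2 < m) :
    Gamma (((m : ℝ) - 2) / 2) / (4 * π ^ ((m : ℝ) / 2)) *
      (((m : ℝ) - 2) * (m * volume.real (ball (0 : EuclideanSpace ℝ (Fin m)) 1))) = 1 := by
  have : Nonempty (Fin m) := ⟨⟨0, by omega⟩⟩
  have hm' : (2 : ℝ) < m := by exact_mod_cast hm
  have hvol : volume.real (ball (0 : EuclideanSpace ℝ (Fin m)) 1) =
      π ^ ((m : ℝ) / 2) / Gamma ((m : ℝ) / 2 + 1) := by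
    rw [measureReal_def, EuclideanSpace.volume_ball, Fintype.card_fin, ENNReal.ofReal_one, one_pow,
      one_mul, ENNReal.toReal_ofReal (by positivity), sqrt_eq_rpow, ← rpow_natCast,
      ← rpow_mul pi_pos.le]
    ring_nf
  have hGamma : Gamma ((m : ℝ) / 2 + 1) =
      (m / 2) * (((m : ℝ) - 2) / 2) * Gamma (((m : ℝ) - 2) / 2) := by
    rw [Gamma_add_one (by positivity), show (m : ℝ) / 2 = ((m : ℝ) - 2) / 2 + 1 by ring,
      Gamma_add_one (by linarith : ((m : ℝ) - 2) / 2 ≠ 0)]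
    ring
  have hm2 : (m : ℝ) - 2 ≠ 0 := by linarith
  have hΓ : Gamma (((m : ℝ) - 2) / 2) ≠ 0 := (Gamma_pos_of_pos (by linarith)).ne'
  rw [hvol, hGamma]
  field_simp
  ring

/-- Key potential estimate for the Green function of the half-space `H ⊆ ℝ^m`, `m ≥ 3`:
if `A ⊆ H` has measure at most `ω_m r^m`, then
`∫_A c_m(‖x−y‖^{2−m} − ‖x*−y‖^{2−m}) dy ≤ 2r⟨x,e⟩`. -/
theorem stmt6 (m : ℕ) (hm : 3 ≤ m) (e : EuclideanSpace ℝ (Fin m)) (he : ‖e‖ = 1)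
    (H : Set (EuclideanSpace ℝ (Fin m))) (hH : H = {y | 0 < ⟪y, e⟫})
    (x : EuclideanSpace ℝ (Fin m)) (hx : x ∈ H)
    (xstar : EuclideanSpace ℝ (Fin m)) (hxstar : xstar = x - (2 * ⟪x, e⟫) • e)
    (c : ℝ) (hc : c = Real.Gamma (((m : ℝ) - 2) / 2) / (4 * π ^ ((m : ℝ) / 2)))
    (ω : ℝ) (hω : ω = (volume (Metric.ball (0 : EuclideanSpace ℝ (Fin m)) 1)).toReal)
    (r : ℝ) (hr : 0 < r)
    (A : Set (EuclideanSpace ℝ (Fin m))) (hA : MeasurableSet A) (hAH : A ⊆ H)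
    (hAvol : volume A ≤ ENNReal.ofReal (ω * r ^ m)) :
    ∫ y in A, c * (‖x - y‖ ^ ((2 : ℝ) - m) - ‖xstar - y‖ ^ ((2 : ℝ) - m)) ≤
      2 * r * ⟪x, e⟫ := by
  subst hH hxstar
  have : Nonempty (Fin m) := ⟨⟨0, by omega⟩⟩
  replace hx : 0 < ⟪x, e⟫ := hx
  rw [← measureReal_def] at hω
  have hc_nonneg : 0 ≤ c := hc ▸ div_nonneg (Gamma_pos_of_pos (by simp; omega)).le (by positivity)
  have hK_nonneg : 0 ≤ c * (((m : ℝ) - 2) * (2 * ⟪x, e⟫)) :=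
    mul_nonneg hc_nonneg (mul_nonneg (by simp; omega) (by positivity))
  have hconst : c * (((m : ℝ) - 2) * (m * ω)) = 1 := by
    rw [hc, hω]; exact Gamma_div_mul_volume_ball_eq_one hm
  have hdim : 1 ≤ finrank ℝ (EuclideanSpace ℝ (Fin m)) := by rw [finrank_euclideanSpace_fin]; omega
  have hball : volume A ≤ volume (ball x r) := by
    rwa [Measure.addHaar_ball volume x hr.le, finrank_euclideanSpace_fin,
      ← ofReal_measureReal (s := ball 0 1), ← ENNReal.ofReal_mul (by positivity), ← hω, mul_comm]
  have hg_int := integrableOn_norm_sub_rpow_of_measure_ne_top volume hdim x hA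
    (ne_top_of_le_ne_top measure_ball_lt_top.ne hball)
  have hg_le := setIntegral_norm_sub_rpow_le_of_measure_le volume hdim x hr hA hball
  rw [finrank_euclideanSpace_fin] at hg_int hg_le
  rw [← hω] at hg_le
  have hpt : ∀ y ∈ A, c * (‖x - y‖ ^ ((2 : ℝ) - m) - ‖x - (2 * ⟪x, e⟫) • e - y‖ ^ ((2 : ℝ) - m))
      ≤ c * (((m : ℝ) - 2) * (2 * ⟪x, e⟫)) * ‖x - y‖ ^ (1 - m : ℝ) := by
    intro y hy
    have h := norm_sub_rpow_sub_norm_reflection_sub_rpow_le he hx.le (le_of_lt (hAH hy))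
      (p := 2 - m) (by simp; omega)
    rw [show (2 : ℝ) - m - 1 = 1 - m by ring, neg_sub] at h
    rw [mul_assoc]
    exact mul_le_mul_of_nonneg_left h hc_nonneg
  by_cases hint : IntegrableOn
      (fun y ↦ c * (‖x - y‖ ^ ((2 : ℝ) - m) - ‖x - (2 * ⟪x, e⟫) • e - y‖ ^ ((2 : ℝ) - m))) A
  · calc _ ≤ ∫ y in A, c * (((m : ℝ) - 2) * (2 * ⟪x, e⟫)) * ‖x - y‖ ^ (1 - m : ℝ) :=
          setIntegral_mono_on hint (hg_int.const_mul _) hA hpt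
      _ = c * (((m : ℝ) - 2) * (2 * ⟪x, e⟫)) * ∫ y in A, ‖x - y‖ ^ (1 - m : ℝ) :=
          integral_const_mul _ _
      _ ≤ c * (((m : ℝ) - 2) * (2 * ⟪x, e⟫)) * (m * ω * r) :=
          mul_le_mul_of_nonneg_left hg_le hK_nonneg
      _ = 2 * r * ⟪x, e⟫ := by linear_combination (2 * r * ⟪x, e⟫) * hconst
  · rw [integral_undef hint]
    positivity
end

section
/- Let m ≥ 2 be an integer, let R > 0, and let Ω be a non-empty open proper subset of ℝ^m with R-smooth boundary, i.e. for every x₀ ∈ ∂Ω there exist points x₁, x₂ ∈ ℝ^m such that the open ball B_R(x₁) is contained in Ω, the open ball B_R(x₂) is contained in ℝ^m ∖ cl(Ω), and cl(B_R(x₁)) ∩ cl(B_R(x₂)) = {x₀}. Let v : ℝ^m → ℝ be a function such that for every c ∈ ℝ^m and ρ > 0 with B_ρ(c) ⊆ Ω and every x ∈ B_ρ(c) one has v(x) ≥ (ρ² − ‖x − c‖²)/(2m). Then for every x ∈ Ω, v(x) ≥ dist(x, ∂Ω) · R/(2m). -/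
/-!
Let `d = dist(x, ∂Ω)`, so that `B_d(x) ⊆ Ω`. If `d ≥ R`, the torsion bound on `B_d(x)` gives
`v(x) ≥ d²/(2m) ≥ dR/(2m)`. Otherwise let `x₀ ∈ ∂Ω` be a nearest boundary point and `B_R(x₁)`,
`B_R(x₂)` the tangent balls at `x₀`. They are disjoint, so `x₀` is the midpoint of `x₁x₂`, and
`B_d(x)` is disjoint from `B_R(x₂)`, so `|x - x₂| ≥ d + R`. Apollonius's theorem then gives
`|x - x₁| ≤ R - d`, and the torsion bound on `B_R(x₁)` yields
`v(x) ≥ (R² - (R - d)²)/(2m) ≥ dR/(2m)`.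
-/

open Metric Set

theorem Metric.ball_infDist_frontier_subset {E : Type*} [NormedAddCommGroup E] [NormedSpace ℝ E]
    {s : Set E} {x : E} (hx : x ∈ s) : ball x (infDist x (frontier s)) ⊆ s := by
  by_contra hsub
  obtain ⟨y, hy, -⟩ := not_subset.1 hsub
  have hcover : ball x (infDist x (frontier s)) ⊆ interior s ∪ interior sᶜ :=
    compl_frontier_eq_union_interior (s := s) ▸ ball_infDist_subset_compl
  have hxs : x ∈ interior s :=
    (hcover (mem_ball_self (pos_of_mem_ball hy))).resolve_right fun h => interior_subset h hx
  refine hsub (((convex_ball x _).isPreconnected.subset_left_of_subset_union isOpen_interior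
    isOpen_interior ?_ hcover ⟨x, mem_ball_self (pos_of_mem_ball hy), hxs⟩).trans interior_subset)
  exact disjoint_compl_right.mono interior_subset interior_subset

theorem dist_sq_le_of_touching_balls {E : Type*} [NormedAddCommGroup E]
    [InnerProductSpace ℝ E] {x x₀ x₁ x₂ : E} {R : ℝ} (h₁ : dist x₀ x₁ ≤ R) (h₂ : dist x₀ x₂ ≤ R)
    (h₁₂ : R + R ≤ dist x₁ x₂) (hx₂ : dist x x₀ + R ≤ dist x x₂) :
    dist x x₁ ^ 2 ≤ (R - dist x x₀) ^ 2 := by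
  have hR : 0 ≤ R := dist_nonneg.trans h₁
  have htri := dist_triangle_left x₁ x₂ x₀
  obtain rfl : x₀ = midpoint ℝ x₁ x₂ :=
    eq_midpoint_of_dist_eq_half (by rw [dist_comm]; linarith) (by linarith)
  have hD : dist x₁ x₂ = R + R := by linarith
  have happ := EuclideanGeometry.dist_sq_add_dist_sq_eq_two_mul_dist_midpoint_sq_add_half_dist_sq
    x x₁ x₂
  have hx₂sq := pow_le_pow_left₀ (by positivity) hx₂ 2
  rw [hD] at happ
  nlinarith

section TorsionBound

variable {E : Type*} [NormedAddCommGroup E] {Ω : Set E} {v : E → ℝ} {k : ℝ}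

theorem nonneg_of_ball_torsion_le (hk : 0 ≤ k)
    (hv : ∀ (c : E) (ρ : ℝ), 0 < ρ → ball c ρ ⊆ Ω → ∀ x ∈ ball c ρ, (ρ ^ 2 - ‖x - c‖ ^ 2) / k ≤ v x)
    (hΩ : IsOpen Ω) {x : E} (hx : x ∈ Ω) : 0 ≤ v x := by
  obtain ⟨ε, hε, hεΩ⟩ := isOpen_iff.1 hΩ x hx
  have := hv x ε hε hεΩ x (mem_ball_self hε)
  rw [sub_self, norm_zero, zero_pow two_ne_zero, sub_zero] at this
  exact (div_nonneg (sq_nonneg ε) hk).trans this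

theorem mul_div_le_of_ball_torsion_le (hk : 0 ≤ k)
    (hv : ∀ (c : E) (ρ : ℝ), 0 < ρ → ball c ρ ⊆ Ω → ∀ x ∈ ball c ρ, (ρ ^ 2 - ‖x - c‖ ^ 2) / k ≤ v x)
    {c x : E} {ρ d R : ℝ} (hd : 0 < d) (hdρ : d ≤ ρ) (hRρ : R ≤ ρ) (hball : ball c ρ ⊆ Ω)
    (hx : ‖x - c‖ ^ 2 ≤ (ρ - d) ^ 2) : d * R / k ≤ v x := by
  have hρ : 0 < ρ := hd.trans_le hdρ
  have hxc : x ∈ ball c ρ := by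
    rw [mem_ball, dist_eq_norm]
    exact (pow_lt_pow_iff_left₀ (norm_nonneg _) hρ.le two_ne_zero).1 (by nlinarith)
  refine le_trans (div_le_div_of_nonneg_right ?_ hk) (hv c ρ hρ hball x hxc)
  nlinarith

end TorsionBound

theorem stmt8_general (m : ℕ) (R : ℝ)
    (Ω : Set (EuclideanSpace ℝ (Fin m))) (hΩopen : IsOpen Ω)
    (hsmooth : ∀ x₀ ∈ frontier Ω, ∃ x₁ x₂ : EuclideanSpace ℝ (Fin m),
      ball x₁ R ⊆ Ω ∧ ball x₂ R ⊆ (closure Ω)ᶜ ∧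
      closure (ball x₁ R) ∩ closure (ball x₂ R) = {x₀})
    (v : EuclideanSpace ℝ (Fin m) → ℝ)
    (hv : ∀ (c : EuclideanSpace ℝ (Fin m)) (ρ : ℝ), 0 < ρ → ball c ρ ⊆ Ω →
      ∀ x ∈ ball c ρ, (ρ ^ 2 - ‖x - c‖ ^ 2) / (2 * m) ≤ v x) :
    ∀ x ∈ Ω, infDist x (frontier Ω) * R / (2 * m) ≤ v x := by
  intro x hx
  have hk : (0 : ℝ) ≤ 2 * m := by positivity
  have hball := ball_infDist_frontier_subset hx
  generalize hd_def : infDist x (frontier Ω) = d at hball ⊢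
  rcases (hd_def ▸ infDist_nonneg : 0 ≤ d).eq_or_lt with hd | hd
  · rw [← hd, zero_mul, zero_div]
    exact nonneg_of_ball_torsion_le hk hv hΩopen hx
  rcases le_or_gt R d with hRd | hdR
  · exact mul_div_le_of_ball_torsion_le hk hv hd le_rfl hRd hball (by simp)
  have hR : 0 < R := hd.trans hdR
  have hfrontier : (frontier Ω).Nonempty := by
    by_contra hempty
    simp [← hd_def, not_nonempty_iff_eq_empty.1 hempty] at hd
  obtain ⟨x₀, hx₀, hdist⟩ := isClosed_frontier.exists_infDist_eq_dist hfrontier x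
  rw [hd_def] at hdist
  obtain ⟨x₁, x₂, hB₁, hB₂, htangent⟩ := hsmooth x₀ hx₀
  have hx₀ : x₀ ∈ closedBall x₁ R ∩ closedBall x₂ R := by
    rw [← closure_ball x₁ hR.ne', ← closure_ball x₂ hR.ne', htangent]
    rfl
  have hΩ : Disjoint Ω (closure Ω)ᶜ := disjoint_compl_right.mono_left subset_closure
  have h₁₂ : R + R ≤ dist x₁ x₂ := (disjoint_ball_ball_iff hR hR).1 (hΩ.mono hB₁ hB₂)
  have hx₂ : d + R ≤ dist x x₂ := (disjoint_ball_ball_iff hd hR).1 (hΩ.mono hball hB₂)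
  refine mul_div_le_of_ball_torsion_le hk hv hd hdR.le le_rfl hB₁ ?_
  rw [← dist_eq_norm, hdist]
  exact dist_sq_le_of_touching_balls hx₀.1 hx₀.2 h₁₂ (hdist ▸ hx₂)

/-- Lemma 2 of the paper: if `Ω ⊆ ℝ^m` is a non-empty open proper subset with `R`-smooth
boundary, and `v` dominates the torsion function of every open ball contained in `Ω`,
then `v(x) ≥ dist(x, ∂Ω)·R/(2m)` for every `x ∈ Ω`. -/
theorem stmt8 (m : ℕ) (hm : 2 ≤ m) (R : ℝ) (hR : 0 < R)
    (Ω : Set (EuclideanSpace ℝ (Fin m))) (hΩopen : IsOpen Ω) (hΩne : Ω.Nonempty)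
    (hΩproper : Ω ≠ Set.univ)
    (hsmooth : ∀ x₀ ∈ frontier Ω, ∃ x₁ x₂ : EuclideanSpace ℝ (Fin m),
      ball x₁ R ⊆ Ω ∧ ball x₂ R ⊆ (closure Ω)ᶜ ∧
      closure (ball x₁ R) ∩ closure (ball x₂ R) = {x₀})
    (v : EuclideanSpace ℝ (Fin m) → ℝ)
    (hv : ∀ (c : EuclideanSpace ℝ (Fin m)) (ρ : ℝ), 0 < ρ → ball c ρ ⊆ Ω →
      ∀ x ∈ ball c ρ, (ρ ^ 2 - ‖x - c‖ ^ 2) / (2 * m) ≤ v x) :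
    ∀ x ∈ Ω, infDist x (frontier Ω) * R / (2 * m) ≤ v x :=
  stmt8_general m R Ω hΩopen hsmooth v hv
end

section
/- Let m ≥ 2 be an integer, let R > 0, and let Ω be a non-empty open proper subset of ℝ^m with R-smooth boundary, i.e. for every x₀ ∈ ∂Ω there exist points x₁, x₂ ∈ ℝ^m such that the open ball B_R(x₁) is contained in Ω, the open ball B_R(x₂) is contained in ℝ^m ∖ cl(Ω), and cl(B_R(x₁)) ∩ cl(B_R(x₂)) = {x₀}. Then for every x ∈ Ω there exists c ∈ ℝ^m such that x ∈ B_R(c) and B_R(c) ⊆ Ω. -/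
open Metric

/-!
Let `x ∈ Ω` be at distance `d < R` from `Ωᶜ`, and let `y ∈ ∂Ω` be a nearest boundary point.
The two balls of radius `R` given at `y` touch there, so `y` is the midpoint of their centres
`x₁, x₂`. The ball `B_d(x)` lies in `Ω`, hence is disjoint from `B_R(x₂)` while touching
`y`, so `y` also lies on the segment from `x` to `x₂`. Thus `x` lies on the line through `x₂`
and `x₁` at distance `|d - R| < R` from `x₁`, i.e. `x ∈ B_R(x₁) ⊆ Ω`.
-/

variable {E : Type*} [NormedAddCommGroup E] [NormedSpace ℝ E]

theorem dist_eq_abs_sub_of_wbtw {x y x₁ x₂ : E} (h₁₂ : Wbtw ℝ x₁ y x₂)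
    (hmid : dist x₁ y = dist y x₂) (h : Wbtw ℝ x y x₂) :
    dist x x₁ = |dist x y - dist y x₂| := by
  have hreflect : y - x₁ = x₂ - y := h₁₂.sameRay_vsub.eq_of_norm_eq <| by
    rw [← dist_eq_norm_vsub', ← dist_eq_norm_vsub, hmid, dist_comm]
  have hray : SameRay ℝ (x - y) (y - x₂) := by simpa using h.sameRay_vsub.neg
  rw [dist_eq_norm, dist_eq_norm, dist_eq_norm, ← hray.norm_sub]
  congr 1
  linear_combination (norm := module) hreflect

theorem wbtw_of_add_le_dist [StrictConvexSpace ℝ E] {a y b : E}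
    (h : dist a y + dist y b ≤ dist a b) : Wbtw ℝ a y b :=
  dist_add_dist_eq_iff.mp (le_antisymm h (dist_triangle a y b))

theorem add_le_dist_of_ball_subset {Ω : Set E} {a b : E} {r s : ℝ} (hr : 0 < r) (hs : 0 < s)
    (ha : ball a r ⊆ Ω) (hb : ball b s ⊆ (closure Ω)ᶜ) : r + s ≤ dist a b :=
  (disjoint_ball_ball_iff hr hs).mp
    ((Set.disjoint_compl_right_iff_subset.mpr subset_closure).mono ha hb)

theorem IsOpen.exists_mem_frontier_dist_eq_infDist [ProperSpace E] {Ω : Set E} (hΩ : IsOpen Ω)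
    (hc : Ωᶜ.Nonempty) {x : E} (hx : x ∈ Ω) : ∃ y ∈ frontier Ω, dist x y = infDist x Ωᶜ := by
  obtain ⟨y, hy, hxy⟩ := hΩ.isClosed_compl.exists_infDist_eq_dist hc x
  have hd : 0 < infDist x Ωᶜ := (hΩ.isClosed_compl.notMem_iff_infDist_pos hc).mp (not_not.mpr hx)
  have hy_closure : y ∈ closure (ball x (infDist x Ωᶜ)) := by
    rw [closure_ball x hd.ne']
    exact mem_closedBall'.mpr hxy.ge
  refine ⟨y, ?_, hxy.symm⟩
  rw [hΩ.frontier_eq]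
  exact ⟨closure_mono ball_infDist_compl_subset hy_closure, hy⟩

theorem dist_eq_of_mem_closure_ball_of_notMem_ball {c y : E} {r : ℝ} (hr : r ≠ 0)
    (hcl : y ∈ closure (ball c r)) (hy : y ∉ ball c r) : dist y c = r := by
  rw [← mem_sphere, ← frontier_ball c hr, frontier, isOpen_ball.interior_eq]
  exact ⟨hcl, hy⟩

def HasSmoothBoundary (R : ℝ) (Ω : Set E) : Prop :=
  ∀ x₀ ∈ frontier Ω, ∃ x₁ x₂ : E,
    ball x₁ R ⊆ Ω ∧ ball x₂ R ⊆ (closure Ω)ᶜ ∧ closure (ball x₁ R) ∩ closure (ball x₂ R) = {x₀}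

theorem HasSmoothBoundary.exists_ball_subset [StrictConvexSpace ℝ E] [ProperSpace E] {R : ℝ}
    {Ω : Set E} (hΩ : HasSmoothBoundary R Ω) (hR : 0 < R) (hopen : IsOpen Ω) {x : E}
    (hx : x ∈ Ω) : ∃ c, x ∈ ball c R ∧ ball c R ⊆ Ω := by
  rcases Ωᶜ.eq_empty_or_nonempty with hc | hc
  · exact ⟨x, mem_ball_self hR, by simp [Set.compl_empty_iff.mp hc]⟩
  set d := infDist x Ωᶜ
  have hd : 0 < d := (hopen.isClosed_compl.notMem_iff_infDist_pos hc).mp (not_not.mpr hx)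
  rcases le_or_gt R d with hRd | hdR
  · exact ⟨x, mem_ball_self hR, (ball_subset_ball hRd).trans ball_infDist_compl_subset⟩
  obtain ⟨y, hy, hxy⟩ := hopen.exists_mem_frontier_dist_eq_infDist hc hx
  obtain ⟨x₁, x₂, h₁, h₂, h₁₂⟩ := hΩ y hy
  rw [hopen.frontier_eq] at hy
  have hy_mem : y ∈ closure (ball x₁ R) ∩ closure (ball x₂ R) := h₁₂ ▸ rfl
  have hy₁ : dist y x₁ = R :=
    dist_eq_of_mem_closure_ball_of_notMem_ball hR.ne' hy_mem.1 fun h ↦ hy.2 (h₁ h)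
  have hy₂ : dist y x₂ = R :=
    dist_eq_of_mem_closure_ball_of_notMem_ball hR.ne' hy_mem.2 fun h ↦ h₂ h hy.1
  have hmid : Wbtw ℝ x₁ y x₂ := wbtw_of_add_le_dist <| by
    rw [dist_comm, hy₁, hy₂]; exact add_le_dist_of_ball_subset hR hR h₁ h₂
  have hseg : Wbtw ℝ x y x₂ := wbtw_of_add_le_dist <| by
    rw [hxy, hy₂]; exact add_le_dist_of_ball_subset hd hR ball_infDist_compl_subset h₂
  refine ⟨x₁, ?_, h₁⟩
  rw [mem_ball, dist_eq_abs_sub_of_wbtw hmid (by rw [dist_comm, hy₁, hy₂]) hseg, hxy, hy₂,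
    abs_sub_lt_iff]
  constructor <;> linarith

theorem stmt9_general (m : ℕ) (R : ℝ) (hR : 0 < R)
    (Ω : Set (EuclideanSpace ℝ (Fin m))) (hΩopen : IsOpen Ω)
    (hsmooth : ∀ x₀ ∈ frontier Ω, ∃ x₁ x₂ : EuclideanSpace ℝ (Fin m),
      ball x₁ R ⊆ Ω ∧ ball x₂ R ⊆ (closure Ω)ᶜ ∧
      closure (ball x₁ R) ∩ closure (ball x₂ R) = {x₀}) :
    ∀ x ∈ Ω, ∃ c : EuclideanSpace ℝ (Fin m), x ∈ ball c R ∧ ball c R ⊆ Ω :=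
  fun _ hx ↦ HasSmoothBoundary.exists_ball_subset hsmooth hR hΩopen hx

/-- Covering property of sets with `R`-smooth boundary: every point of `Ω` lies in an open
ball of radius exactly `R` contained in `Ω`. -/
theorem stmt9 (m : ℕ) (hm : 2 ≤ m) (R : ℝ) (hR : 0 < R)
    (Ω : Set (EuclideanSpace ℝ (Fin m))) (hΩopen : IsOpen Ω) (hΩne : Ω.Nonempty)
    (hΩproper : Ω ≠ Set.univ)
    (hsmooth : ∀ x₀ ∈ frontier Ω, ∃ x₁ x₂ : EuclideanSpace ℝ (Fin m),
      ball x₁ R ⊆ Ω ∧ ball x₂ R ⊆ (closure Ω)ᶜ ∧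
      closure (ball x₁ R) ∩ closure (ball x₂ R) = {x₀}) :
    ∀ x ∈ Ω, ∃ c : EuclideanSpace ℝ (Fin m), x ∈ ball c R ∧ ball c R ⊆ Ω :=
  stmt9_general m R hR Ω hΩopen hsmooth
end

section
/- Let m ≥ 1 be an integer, let Ω ⊆ ℝ^m be a measurable set, let λ ≥ 0, and let p : Ω × Ω × (0, ∞) → [0, ∞) be a function, measurable in the intermediate variable, satisfying: (i) symmetry, p(x, y; t) = p(y, x; t) for all x, y ∈ Ω and t > 0; (ii) the semigroup property, p(x, y; s + t) = ∫_Ω p(x, z; s) p(z, y; t) dz for all x, y ∈ Ω and s, t > 0; (iii) the Gaussian bound p(x, y; t) ≤ (4πt)^{−m/2} exp(−‖x − y‖²/(4t)); (iv) the spectral decay p(z, z; t) ≤ e^{−sλ} p(z, z; t − s) for all z ∈ Ω and 0 < s < t. Then for all x, y ∈ Ω and t > 0: p(x, y; t) ≤ 2^{m/3} (4πt)^{−m/2} exp(−tλ/6 − ‖x − y‖ λ^{1/2}/6 − ‖x − y‖²/(24t)). -/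
/-!
Split the time `t` in halves. The semigroup property, symmetry and Cauchy–Schwarz give
`p(x,y;t) ≤ √(p(x,x;t) p(y,y;t))`, and on the diagonal the spectral decay followed by the
Gaussian bound at time `t/2` gives `p(z,z;t) ≤ 2^{m/2}(4πt)^{-m/2} e^{-tλ/2}`. So `p(x,y;t)` is
bounded both by this on-diagonal quantity `D` and by the Gaussian bound `G` at time `t`, hence by
`(D²G)^{1/3}`. Completing the square, with `d = ‖x - y‖`,
`-tλ - d²/(4t) ≤ 3(-tλ/6 - d√λ/6 - d²/(24t))` with defect
`(2t√λ - d)²/(8t)`, which turns `(D²G)^{1/3}` into the claimed bound.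
-/

open MeasureTheory Real

section Gaussian

variable {V : Type*} [NormedAddCommGroup V] [InnerProductSpace ℝ V] [FiniteDimensional ℝ V]
  [MeasurableSpace V] [BorelSpace V]

theorem integrable_exp_neg_mul_norm_sub_sq {c : ℝ} (hc : 0 < c) (x : V) :
    Integrable (fun z : V => exp (-c * ‖x - z‖ ^ 2)) := by
  have h : Integrable (fun v : V => exp (-c * ‖v‖ ^ 2)) := by
    simpa [Complex.norm_exp, ← Complex.ofReal_pow] using
      (GaussianFourier.integrable_cexp_neg_mul_sq_norm_add (V := V) (b := c) (by simpa) 0 0).norm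
  simpa [norm_sub_rev] using h.comp_sub_right x

theorem memLp_two_of_norm_le_gaussian {Ω : Set V} {f : V → ℝ}
    (hf : AEStronglyMeasurable f (volume.restrict Ω)) {C c : ℝ} (hc : 0 < c) (x : V)
    (hbound : ∀ᵐ z ∂(volume.restrict Ω), ‖f z‖ ≤ C * exp (-c * ‖x - z‖ ^ 2)) :
    MemLp f 2 (volume.restrict Ω) := by
  have hgauss : MemLp (fun z : V => exp (-c * ‖x - z‖ ^ 2)) 2 := by
    refine (memLp_two_iff_integrable_sq (by fun_prop)).2 ?_
    simpa [← exp_nat_mul, ← mul_assoc] using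
      integrable_exp_neg_mul_norm_sub_sq (by positivity : 0 < 2 * c) x
  refine (hgauss.restrict Ω).const_mul C |>.of_le hf ?_
  filter_upwards [hbound] with z hz
  exact hz.trans (le_abs_self _)

end Gaussian

theorem integral_mul_le_sqrt_mul_sqrt_of_nonneg {α : Type*} [MeasurableSpace α] {μ : Measure α}
    {f g : α → ℝ} (hf0 : 0 ≤ᵐ[μ] f) (hg0 : 0 ≤ᵐ[μ] g) (hf : MemLp f 2 μ) (hg : MemLp g 2 μ) :
    ∫ a, f a * g a ∂μ ≤ √(∫ a, f a * f a ∂μ) * √(∫ a, g a * g a ∂μ) := by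
  have h := integral_mul_le_Lp_mul_Lq_of_nonneg Real.HolderConjugate.two_two hf0 hg0
    (by simpa using hf) (by simpa using hg)
  simpa only [rpow_two, ← sqrt_eq_rpow, sq] using h

theorem kernel_le_sqrt_mul_sqrt_diag {α : Type*} [MeasurableSpace α] {μ : Measure α} {Ω : Set α}
    (hΩ : MeasurableSet Ω) {p : α → α → ℝ → ℝ} {s : ℝ}
    (hnonneg : ∀ x ∈ Ω, ∀ z ∈ Ω, 0 ≤ p x z s)
    (hsymm : ∀ x ∈ Ω, ∀ z ∈ Ω, p x z s = p z x s)
    (hsemi : ∀ x ∈ Ω, ∀ y ∈ Ω, p x y (s + s) = ∫ z in Ω, p x z s * p z y s ∂μ)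
    (hL2 : ∀ x ∈ Ω, MemLp (fun z => p x z s) 2 (μ.restrict Ω))
    {x y : α} (hx : x ∈ Ω) (hy : y ∈ Ω) :
    p x y (s + s) ≤ √(p x x (s + s)) * √(p y y (s + s)) := by
  have hinner : ∀ w ∈ Ω, ∀ w' ∈ Ω, p w w' (s + s) = ∫ z in Ω, p w z s * p w' z s ∂μ :=
    fun w hw w' hw' => (hsemi w hw w' hw').trans <|
      setIntegral_congr_fun hΩ fun z hz => by rw [hsymm z hz w' hw']
  have hae : ∀ w ∈ Ω, 0 ≤ᵐ[μ.restrict Ω] fun z => p w z s := fun w hw =>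
    (ae_restrict_mem hΩ).mono fun z hz => hnonneg w hw z hz
  rw [hinner x hx y hy, hinner x hx x hx, hinner y hy y hy]
  exact integral_mul_le_sqrt_mul_sqrt_of_nonneg (hae x hx) (hae y hy) (hL2 x hx) (hL2 y hy)

theorem diag_le_of_gaussian_of_decay {q : ℝ → ℝ} {n lam t : ℝ} (ht : 0 < t)
    (hgauss : ∀ s, 0 < s → q s ≤ (4 * π * s) ^ (-n / 2))
    (hdecay : ∀ s t, 0 < s → s < t → q t ≤ exp (-s * lam) * q (t - s)) :
    q t ≤ 2 ^ (n / 2) * (4 * π * t) ^ (-n / 2) * exp (-t * lam / 2) := by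
  have hhalf : (4 * π * (t / 2)) ^ (-n / 2) = 2 ^ (n / 2) * (4 * π * t) ^ (-n / 2) := by
    rw [mul_div_assoc', div_rpow (by positivity) zero_le_two, neg_div, rpow_neg zero_le_two,
      div_inv_eq_mul, mul_comm]
  calc q t ≤ exp (-(t / 2) * lam) * q (t / 2) := by
        simpa only [sub_half] using hdecay (t / 2) t (half_pos ht) (half_lt_self ht)
    _ ≤ exp (-(t / 2) * lam) * (4 * π * (t / 2)) ^ (-n / 2) := by
        gcongr
        exact hgauss _ (half_pos ht)
    _ = 2 ^ (n / 2) * (4 * π * t) ^ (-n / 2) * exp (-t * lam / 2) := by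
        rw [hhalf, show -(t / 2) * lam = -t * lam / 2 by ring]
        ring

theorem le_of_sq_mul_le_pow_three {P D G R : ℝ} (hP : 0 ≤ P) (hPD : P ≤ D) (hPG : P ≤ G)
    (hR : 0 ≤ R) (h : D ^ 2 * G ≤ R ^ 3) : P ≤ R := by
  refine le_of_pow_le_pow_left₀ three_ne_zero hR ?_
  calc P ^ 3 = P ^ 2 * P := by ring
    _ ≤ D ^ 2 * G := by gcongr
    _ ≤ R ^ 3 := h

theorem neg_mul_sub_sq_div_le_three_mul {t lam d : ℝ} (ht : 0 < t) (hlam : 0 ≤ lam) :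
    -t * lam - d ^ 2 / (4 * t) ≤ 3 * (-t * lam / 6 - d * √lam / 6 - d ^ 2 / (24 * t)) := by
  have hsquare : 3 * (-t * lam / 6 - d * √lam / 6 - d ^ 2 / (24 * t)) - (-t * lam - d ^ 2 / (4 * t))
      = (2 * t * √lam - d) ^ 2 / (8 * t) := by
    have hroot : lam = √lam ^ 2 := (sq_sqrt hlam).symm
    generalize √lam = r at hroot ⊢
    subst hroot
    field_simp
    ring
  linarith [show 0 ≤ (2 * t * √lam - d) ^ 2 / (8 * t) by positivity]

theorem le_heat_bound_of_le_diag_of_le_gaussian {n t lam d A P : ℝ} (ht : 0 < t) (hlam : 0 ≤ lam)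
    (hA : 0 ≤ A) (hP : 0 ≤ P) (hdiag : P ≤ 2 ^ (n / 2) * A * exp (-t * lam / 2))
    (hgauss : P ≤ A * exp (-d ^ 2 / (4 * t))) :
    P ≤ 2 ^ (n / 3) * A * exp (-t * lam / 6 - d * √lam / 6 - d ^ 2 / (24 * t)) := by
  refine le_of_sq_mul_le_pow_three hP hdiag hgauss (by positivity) ?_
  have htwo : ((2 : ℝ) ^ (n / 2)) ^ 2 = (2 ^ (n / 3)) ^ 3 := by
    rw [← rpow_natCast, ← rpow_natCast, ← rpow_mul zero_le_two, ← rpow_mul zero_le_two]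
    norm_num
  have hexp : exp (-t * lam / 2) ^ 2 * exp (-d ^ 2 / (4 * t)) = exp (-t * lam - d ^ 2 / (4 * t)) := by
    rw [← exp_nat_mul, ← exp_add]
    congr 1
    push_cast
    ring
  calc (2 ^ (n / 2) * A * exp (-t * lam / 2)) ^ 2 * (A * exp (-d ^ 2 / (4 * t)))
      = (2 ^ (n / 3)) ^ 3 * A ^ 3 * exp (-t * lam - d ^ 2 / (4 * t)) := by
        rw [← htwo, ← hexp]
        ring
    _ ≤ (2 ^ (n / 3)) ^ 3 * A ^ 3 * exp (3 * (-t * lam / 6 - d * √lam / 6 - d ^ 2 / (24 * t))) := by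
        gcongr
        exact neg_mul_sub_sq_div_le_three_mul ht hlam
    _ = (2 ^ (n / 3) * A * exp (-t * lam / 6 - d * √lam / 6 - d ^ 2 / (24 * t))) ^ 3 := by
        rw [mul_pow, mul_pow, ← exp_nat_mul]
        norm_num

theorem stmt11_general (m : ℕ) (Ω : Set (EuclideanSpace ℝ (Fin m)))
    (hΩ : MeasurableSet Ω) (lam : ℝ) (hlam : 0 ≤ lam)
    (p : EuclideanSpace ℝ (Fin m) → EuclideanSpace ℝ (Fin m) → ℝ → ℝ)
    (hnonneg : ∀ x ∈ Ω, ∀ y ∈ Ω, ∀ t : ℝ, 0 < t → 0 ≤ p x y t)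
    (hmeas : ∀ (x : EuclideanSpace ℝ (Fin m)) (t : ℝ), Measurable (fun z => p x z t))
    (hsymm : ∀ x ∈ Ω, ∀ y ∈ Ω, ∀ t : ℝ, 0 < t → p x y t = p y x t)
    (hsemi : ∀ x ∈ Ω, ∀ y ∈ Ω, ∀ s t : ℝ, 0 < s → 0 < t →
      p x y (s + t) = ∫ z in Ω, p x z s * p z y t)
    (hgauss : ∀ x ∈ Ω, ∀ y ∈ Ω, ∀ t : ℝ, 0 < t →
      p x y t ≤ (4 * π * t) ^ (-(m : ℝ) / 2) * exp (-‖x - y‖ ^ 2 / (4 * t)))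
    (hspec : ∀ z ∈ Ω, ∀ s t : ℝ, 0 < s → s < t →
      p z z t ≤ exp (-s * lam) * p z z (t - s)) :
    ∀ x ∈ Ω, ∀ y ∈ Ω, ∀ t : ℝ, 0 < t →
      p x y t ≤ 2 ^ ((m : ℝ) / 3) * (4 * π * t) ^ (-(m : ℝ) / 2) *
        exp (-t * lam / 6 - ‖x - y‖ * Real.sqrt lam / 6 - ‖x - y‖ ^ 2 / (24 * t)) := by
  intro x hx y hy t ht
  have hs : 0 < t / 2 := half_pos ht
  have hL2 : ∀ w ∈ Ω, MemLp (fun z => p w z (t / 2)) 2 (volume.restrict Ω) := fun w hw =>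
    memLp_two_of_norm_le_gaussian (hmeas w _).aestronglyMeasurable
      (C := (4 * π * (t / 2)) ^ (-(m : ℝ) / 2)) (by positivity : 0 < 1 / (4 * (t / 2))) w <| (ae_restrict_mem hΩ).mono fun z hz => by
        rw [norm_of_nonneg (hnonneg w hw z hz _ hs), neg_mul, one_div_mul_eq_div, ← neg_div]
        exact hgauss w hw z hz _ hs
  have hdiag : ∀ z ∈ Ω, p z z t ≤ 2 ^ ((m : ℝ) / 2) * (4 * π * t) ^ (-(m : ℝ) / 2) *
      exp (-t * lam / 2) := fun z hz =>
    diag_le_of_gaussian_of_decay ht (fun s hs => by simpa using hgauss z hz z hz s hs) (hspec z hz)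
  have hCS := kernel_le_sqrt_mul_sqrt_diag hΩ (fun w hw z hz => hnonneg w hw z hz _ hs)
    (fun w hw z hz => hsymm w hw z hz _ hs) (fun w hw z hz => hsemi w hw z hz _ _ hs hs) hL2 hx hy
  rw [add_halves] at hCS
  refine le_heat_bound_of_le_diag_of_le_gaussian ht hlam (by positivity) (hnonneg x hx y hy t ht)
    ?_ (hgauss x hx y hy t ht)
  calc p x y t ≤ √(p x x t) * √(p y y t) := hCS
    _ ≤ √_ * √_ := by gcongr <;> [exact hdiag x hx; exact hdiag y hy]
    _ = _ := mul_self_sqrt (by positivity)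

/-- Heat-kernel estimate (e40) of the paper: a symmetric kernel on `Ω ⊆ ℝ^m` with the
semigroup property, the Gaussian upper bound and spectral decay of rate `λ ≥ 0` satisfies
`p(x,y;t) ≤ 2^{m/3}(4πt)^{−m/2} exp(−tλ/6 − ‖x−y‖λ^{1/2}/6 − ‖x−y‖²/(24t))`. -/
theorem stmt11 (m : ℕ) (hm : 1 ≤ m) (Ω : Set (EuclideanSpace ℝ (Fin m)))
    (hΩ : MeasurableSet Ω) (lam : ℝ) (hlam : 0 ≤ lam)
    (p : EuclideanSpace ℝ (Fin m) → EuclideanSpace ℝ (Fin m) → ℝ → ℝ)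
    (hnonneg : ∀ x ∈ Ω, ∀ y ∈ Ω, ∀ t : ℝ, 0 < t → 0 ≤ p x y t)
    (hmeas : ∀ (x : EuclideanSpace ℝ (Fin m)) (t : ℝ), Measurable (fun z => p x z t))
    (hsymm : ∀ x ∈ Ω, ∀ y ∈ Ω, ∀ t : ℝ, 0 < t → p x y t = p y x t)
    (hsemi : ∀ x ∈ Ω, ∀ y ∈ Ω, ∀ s t : ℝ, 0 < s → 0 < t →
      p x y (s + t) = ∫ z in Ω, p x z s * p z y t)
    (hgauss : ∀ x ∈ Ω, ∀ y ∈ Ω, ∀ t : ℝ, 0 < t →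
      p x y t ≤ (4 * π * t) ^ (-(m : ℝ) / 2) * exp (-‖x - y‖ ^ 2 / (4 * t)))
    (hspec : ∀ z ∈ Ω, ∀ s t : ℝ, 0 < s → s < t →
      p z z t ≤ exp (-s * lam) * p z z (t - s)) :
    ∀ x ∈ Ω, ∀ y ∈ Ω, ∀ t : ℝ, 0 < t →
      p x y t ≤ 2 ^ ((m : ℝ) / 3) * (4 * π * t) ^ (-(m : ℝ) / 2) *
        exp (-t * lam / 6 - ‖x - y‖ * Real.sqrt lam / 6 - ‖x - y‖ ^ 2 / (24 * t)) :=
  stmt11_general m Ω hΩ lam hlam p hnonneg hmeas hsymm hsemi hgauss hspec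
end

section
/- Let m ≥ 1 be an integer, let R > 0 and γ ∈ (0,1). For a Lebesgue measurable set S ⊆ [0, R] define h_S(t) = ∫₀ᵗ s^{m−1}(γ − 1_S(s)) ds for t ∈ [0, R] and v_S(r) = ∫_r^R t^{1−m} h_S(t) dt for r ∈ [0, R]. Let A ⊆ [0, R] be measurable and let ρ ∈ [0, R] satisfy ∫_A s^{m−1} ds = ρ^m/m. Then for every r ∈ [0, R], v_{[0,ρ]}(r) ≤ v_A(r). -/
/-!
The profile `h_S` is `γ t^m/m` minus the weighted mass `∫_{[0,t] ∩ S} s^{m-1} ds`, and among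
sets of the same total weighted mass the initial segment `[0,ρ]` carries the largest mass below
every level `t`. Hence `h_{[0,ρ]} ≤ h_A` pointwise, and integrating against the nonnegative
weight `t^{1-m}` gives `v_{[0,ρ]} ≤ v_A`.
-/

open MeasureTheory intervalIntegral Set

-- The bathtub principle for initial segments.
theorem setIntegral_Icc_inter_le_of_setIntegral_eq {w : ℝ → ℝ} {A : Set ℝ} {t ρ : ℝ}
    (hA : MeasurableSet A) (hwA : IntegrableOn w A) (hwt : IntegrableOn w (Icc 0 t))
    (hwA_nonneg : ∀ s ∈ A, 0 ≤ w s) (hwt_nonneg : ∀ s ∈ Icc 0 t, 0 ≤ w s)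
    (hmass : ∫ s in A, w s = ∫ s in Icc 0 ρ, w s) :
    ∫ s in Icc 0 t ∩ A, w s ≤ ∫ s in Icc 0 t ∩ Icc 0 ρ, w s := by
  rcases le_total t ρ with htρ | hρt
  · rw [inter_eq_left.mpr (Icc_subset_Icc le_rfl htρ)]
    exact setIntegral_mono_set hwt (ae_restrict_of_forall_mem measurableSet_Icc hwt_nonneg)
      inter_subset_left.eventuallyLE
  · rw [inter_eq_right.mpr (Icc_subset_Icc le_rfl hρt), ← hmass]
    exact setIntegral_mono_set hwA (ae_restrict_of_forall_mem hA hwA_nonneg)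
      inter_subset_right.eventuallyLE

theorem integral_pow_sub_one {m : ℕ} (hm : 1 ≤ m) (c : ℝ) :
    ∫ s in (0 : ℝ)..c, s ^ (m - 1) = c ^ m / m := by
  rw [integral_pow, Nat.sub_add_cancel hm, zero_pow (by omega), sub_zero,
    ← Nat.cast_add_one, Nat.sub_add_cancel hm]

-- The profile `h_S` of the statement, i.e. the flux `-t^{m-1} v_S'(t)`.
noncomputable def radialFlux (m : ℕ) (γ : ℝ) (S : Set ℝ) (t : ℝ) : ℝ :=
  ∫ s in (0 : ℝ)..t, s ^ (m - 1) * (γ - S.indicator (fun _ => (1 : ℝ)) s)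

namespace radialFlux

variable {m : ℕ} {γ : ℝ} {S : Set ℝ}

theorem integrand_eq (S : Set ℝ) (s : ℝ) :
    s ^ (m - 1) * (γ - S.indicator (fun _ => (1 : ℝ)) s)
      = γ * s ^ (m - 1) - S.indicator (fun s => s ^ (m - 1)) s := by
  by_cases hs : s ∈ S <;> simp [hs] <;> ring

theorem intervalIntegrable_integrand (hS : MeasurableSet S) (a b : ℝ) :
    IntervalIntegrable (fun s => s ^ (m - 1) * (γ - S.indicator (fun _ => (1 : ℝ)) s))
      volume a b := by
  simp_rw [integrand_eq]
  have hpow : IntervalIntegrable (fun s : ℝ => s ^ (m - 1)) volume a b :=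
    (continuous_pow _).intervalIntegrable a b
  exact (hpow.const_mul γ).sub ⟨hpow.1.indicator hS, hpow.2.indicator hS⟩

theorem eq_sub_setIntegral (hS : MeasurableSet S) {t : ℝ} (ht : 0 ≤ t) :
    radialFlux m γ S t
      = γ * (∫ s in (0 : ℝ)..t, s ^ (m - 1)) - ∫ s in Icc 0 t ∩ S, s ^ (m - 1) := by
  have hpow : IntervalIntegrable (fun s : ℝ => s ^ (m - 1)) volume 0 t :=
    (continuous_pow _).intervalIntegrable 0 t
  rw [radialFlux, integral_congr fun s _ => integrand_eq S s,
    integral_sub (hpow.const_mul γ) ⟨hpow.1.indicator hS, hpow.2.indicator hS⟩,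
    intervalIntegral.integral_const_mul, integral_of_le ht (f := S.indicator _), ← integral_Icc_eq_integral_Ioc,
    setIntegral_indicator hS]

theorem continuous (hS : MeasurableSet S) : Continuous (radialFlux m γ S) :=
  continuous_primitive (intervalIntegrable_integrand hS) 0

theorem norm_le (hγ : γ ∈ Icc (0 : ℝ) 1) (S : Set ℝ) (t : ℝ) :
    ‖radialFlux m γ S t‖ ≤ |t| ^ (m - 1) * |t| := by
  have h := norm_integral_le_of_norm_le_const (C := |t| ^ (m - 1)) (a := 0) (b := t)
    (f := fun s => s ^ (m - 1) * (γ - S.indicator (fun _ => (1 : ℝ)) s)) fun s hs => by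
      have hst : |s| ≤ |t| := by
        rcases le_total 0 t with ht | ht
        · rw [uIoc_of_le ht] at hs
          rw [abs_of_pos hs.1, abs_of_nonneg ht]; exact hs.2
        · rw [uIoc_of_ge ht] at hs
          rw [abs_of_nonpos hs.2, abs_of_nonpos ht]; linarith [hs.1]
      have hind : |γ - S.indicator (fun _ => (1 : ℝ)) s| ≤ 1 := by
        by_cases hsS : s ∈ S <;> simp only [hsS, indicator_of_mem, indicator_of_notMem,
          not_false_eq_true, sub_zero] <;> rw [abs_le] <;> constructor <;> linarith [hγ.1, hγ.2]
      rw [norm_mul, norm_pow, Real.norm_eq_abs, Real.norm_eq_abs]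
      calc |s| ^ (m - 1) * |γ - S.indicator (fun _ => (1 : ℝ)) s|
          ≤ |t| ^ (m - 1) * 1 := by gcongr
        _ = |t| ^ (m - 1) := mul_one _
  simpa [radialFlux] using h

theorem norm_inv_pow_mul_le (hγ : γ ∈ Icc (0 : ℝ) 1) (S : Set ℝ) (t : ℝ) :
    ‖(t ^ (m - 1))⁻¹ * radialFlux m γ S t‖ ≤ ‖t‖ := by
  rw [norm_mul, norm_inv, norm_pow, Real.norm_eq_abs, Real.norm_eq_abs]
  rcases eq_or_ne (|t| ^ (m - 1)) 0 with h0 | h0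
  · rw [h0, inv_zero, zero_mul]; exact abs_nonneg t
  · calc (|t| ^ (m - 1))⁻¹ * ‖radialFlux m γ S t‖
        ≤ (|t| ^ (m - 1))⁻¹ * (|t| ^ (m - 1) * |t|) := by gcongr; exact norm_le hγ S t
      _ = |t| := inv_mul_cancel_left₀ h0 _

theorem intervalIntegrable_inv_pow_mul (hS : MeasurableSet S) (hγ : γ ∈ Icc (0 : ℝ) 1)
    (a b : ℝ) :
    IntervalIntegrable (fun t => (t ^ (m - 1))⁻¹ * radialFlux m γ S t) volume a b :=
  (continuous_id.intervalIntegrable a b).mono_fun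
    (((measurable_id.pow_const _).inv.aestronglyMeasurable).mul
      (continuous hS).aestronglyMeasurable)
    (Filter.Eventually.of_forall fun t => norm_inv_pow_mul_le hγ S t)

theorem Icc_le_of_setIntegral_eq {A : Set ℝ} {R ρ : ℝ} (hA : MeasurableSet A)
    (hAsub : A ⊆ Icc 0 R) (hmass : ∫ s in A, s ^ (m - 1) = ∫ s in Icc 0 ρ, s ^ (m - 1))
    {t : ℝ} (ht : 0 ≤ t) :
    radialFlux m γ (Icc 0 ρ) t ≤ radialFlux m γ A t := by
  rw [eq_sub_setIntegral measurableSet_Icc ht, eq_sub_setIntegral hA ht]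
  refine sub_le_sub_left (setIntegral_Icc_inter_le_of_setIntegral_eq hA ?_ ?_ ?_ ?_ hmass) _
  · exact (continuous_pow _).integrableOn_Icc.mono_set hAsub
  · exact (continuous_pow _).integrableOn_Icc
  · exact fun s hs => pow_nonneg (hAsub hs).1 _
  · exact fun s hs => pow_nonneg hs.1 _

end radialFlux

theorem stmt14_general (m : ℕ) (hm : 1 ≤ m) (R : ℝ)
    (γ : ℝ) (hγ : γ ∈ Set.Ioo (0 : ℝ) 1)
    (h : Set ℝ → ℝ → ℝ)
    (hh : ∀ (S : Set ℝ) (t : ℝ), t ∈ Set.Icc (0 : ℝ) R →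
      h S t = ∫ s in (0 : ℝ)..t, s ^ (m - 1) * (γ - S.indicator (fun _ => (1 : ℝ)) s))
    (v : Set ℝ → ℝ → ℝ)
    (hv : ∀ (S : Set ℝ) (r : ℝ), r ∈ Set.Icc (0 : ℝ) R →
      v S r = ∫ t in r..R, (t ^ (m - 1))⁻¹ * h S t)
    (A : Set ℝ) (hA : MeasurableSet A) (hAsub : A ⊆ Set.Icc (0 : ℝ) R)
    (ρ : ℝ) (hρ : ρ ∈ Set.Icc (0 : ℝ) R)
    (hmass : ∫ s in A, s ^ (m - 1) = ρ ^ m / m) :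
    ∀ r ∈ Set.Icc (0 : ℝ) R, v (Set.Icc 0 ρ) r ≤ v A r := by
  intro r hr
  have hγ' : γ ∈ Icc (0 : ℝ) 1 := Ioo_subset_Icc_self hγ
  have hmass' : ∫ s in A, s ^ (m - 1) = ∫ s in Icc 0 ρ, s ^ (m - 1) := by
    rw [hmass, integral_Icc_eq_integral_Ioc, ← integral_of_le hρ.1, integral_pow_sub_one hm]
  have hv_eq : ∀ S, v S r = ∫ t in r..R, (t ^ (m - 1))⁻¹ * radialFlux m γ S t := fun S => by
    rw [hv S r hr]
    refine integral_congr fun t ht => ?_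
    rw [uIcc_of_le hr.2] at ht
    rw [hh S t ⟨hr.1.trans ht.1, ht.2⟩, radialFlux]
  rw [hv_eq, hv_eq]
  refine integral_mono_on hr.2 (radialFlux.intervalIntegrable_inv_pow_mul measurableSet_Icc hγ' _ _)
    (radialFlux.intervalIntegrable_inv_pow_mul hA hγ' _ _) fun t ht => ?_
  have ht0 : 0 ≤ t := hr.1.trans ht.1
  exact mul_le_mul_of_nonneg_left (radialFlux.Icc_le_of_setIntegral_eq hA hAsub hmass' ht0)
    (inv_nonneg.mpr (pow_nonneg ht0 _))

/-- Among radial subsets of the ball `B_R ⊆ ℝ^m` of prescribed measure, the concentric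
ball minimises the radial solution `v_{B_R,A,γ}` pointwise: with radial profiles
`h_S(t) = ∫₀ᵗ s^{m−1}(γ − 1_S(s)) ds` and `v_S(r) = ∫_r^R t^{1−m} h_S(t) dt`, if
`∫_A s^{m−1} ds = ρ^m/m` then `v_{[0,ρ]} ≤ v_A` on `[0,R]`. -/
theorem stmt14 (m : ℕ) (hm : 1 ≤ m) (R : ℝ) (hR : 0 < R)
    (γ : ℝ) (hγ : γ ∈ Set.Ioo (0 : ℝ) 1)
    (h : Set ℝ → ℝ → ℝ)
    (hh : ∀ (S : Set ℝ) (t : ℝ), t ∈ Set.Icc (0 : ℝ) R →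
      h S t = ∫ s in (0 : ℝ)..t, s ^ (m - 1) * (γ - S.indicator (fun _ => (1 : ℝ)) s))
    (v : Set ℝ → ℝ → ℝ)
    (hv : ∀ (S : Set ℝ) (r : ℝ), r ∈ Set.Icc (0 : ℝ) R →
      v S r = ∫ t in r..R, (t ^ (m - 1))⁻¹ * h S t)
    (A : Set ℝ) (hA : MeasurableSet A) (hAsub : A ⊆ Set.Icc (0 : ℝ) R)
    (ρ : ℝ) (hρ : ρ ∈ Set.Icc (0 : ℝ) R)
    (hmass : ∫ s in A, s ^ (m - 1) = ρ ^ m / m) :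
    ∀ r ∈ Set.Icc (0 : ℝ) R, v (Set.Icc 0 ρ) r ≤ v A r :=
  stmt14_general m hm R γ hγ h hh v hv A hA hAsub ρ hρ hmass
end

section
/- Let γ ∈ (0, 1), set L = log(1/γ) and a = (γ/(1+L))^{1/2}. Then 0 < a < 1 and γ/4 − a²/4 + (a²/4)·log(a²) = −(γ/4)·log(1+L)/(1+L) < 0. -/
open Real

/-- With `a² = γ/(1+L)` and `log γ = -L`, one has `log a² = -L - log(1+L)`, so the term
`-(a²/4)(1+L) = -γ/4` cancels `γ/4` and only `-(a²/4) log(1+L)` survives. -/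
theorem centre_value_eq_of_log_eq_neg {γ L : ℝ} (hγ : γ ≠ 0) (hL : 1 + L ≠ 0)
    (hlog : Real.log γ = -L) :
    γ / 4 - γ / (1 + L) / 4 + γ / (1 + L) / 4 * Real.log (γ / (1 + L)) =
      -(γ / 4) * Real.log (1 + L) / (1 + L) := by
  rw [Real.log_div hγ hL, hlog]
  field_simp
  ring

/-- The value at the centre of the solution `v_{B₁,B_a,γ}` in dimension two, for
`a = (γ/(1+log(1/γ)))^{1/2}`: one has `0 < a < 1` and
`γ/4 − a²/4 + (a²/4)log(a²) = −(γ/4)log(1+L)/(1+L) < 0` with `L = log(1/γ)`. -/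
theorem stmt16 (γ : ℝ) (hγ : γ ∈ Set.Ioo (0 : ℝ) 1)
    (L : ℝ) (hL : L = Real.log (1 / γ))
    (a : ℝ) (ha : a = Real.sqrt (γ / (1 + L))) :
    0 < a ∧ a < 1 ∧
    γ / 4 - a ^ 2 / 4 + (a ^ 2 / 4) * Real.log (a ^ 2) =
      -(γ / 4) * Real.log (1 + L) / (1 + L) ∧
    -(γ / 4) * Real.log (1 + L) / (1 + L) < 0 := by
  obtain ⟨hγ0, hγ1⟩ := hγ
  have hL0 : 0 < L := hL ▸ Real.log_pos (one_lt_one_div hγ0 hγ1)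
  have hγL : γ / (1 + L) < 1 := (div_lt_one (by positivity)).2 (by linarith)
  have hlog : Real.log γ = -L := by rw [hL, one_div, Real.log_inv, neg_neg]
  have ha2 : a ^ 2 = γ / (1 + L) := ha ▸ sq_sqrt (by positivity)
  refine ⟨ha ▸ Real.sqrt_pos.2 (by positivity), ha ▸ (Real.sqrt_lt' one_pos).2 (by rwa [one_pow]), ?_, ?_⟩
  · rw [ha2]
    exact centre_value_eq_of_log_eq_neg hγ0.ne' (by positivity) hlog
  · have : 0 < Real.log (1 + L) := Real.log_pos (by linarith)
    rw [neg_mul, neg_div, neg_lt_zero]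
    positivity
end
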